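/- Let H be a reproducing kernel Hilbert space on a set D with kernel K, let h ∈ H, and let α > 0. Then the squared worst-case error of every n-point quadrature rule for the functional S_h(f) = ⟨f,h⟩ is at least ‖h‖²_H − 1/α if and only if for every choice of points x_1,…,x_n ∈ D the n×n matrix with entries K(x_j,x_k) − α·conj(h(x_j))·h(x_k) is positive semi-definite. -/

import Mathlib

/-!
The rule with nodes `x` and weights `a` has worst-case error `‖∑ conj (a k) • K(x k, ·) - h‖`,
so the lower bound is a statement about the vectors `y` of the span `V` of the `K(x k, ·)`.
Expanding `‖c • y - h‖²` and minimising over the scalar `c` shows that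
`‖h‖² - 1/α ≤ ‖c • y - h‖²` for all `c` iff `α |⟪y, h⟫|² ≤ ‖y‖²`; as `V` is closed under
scalars, the bound holds iff `‖y‖² - α |⟪y, h⟫|² ≥ 0` on `V`. This is the quadratic form of
`gram - α b b*` (with `b k = ⟪K(x k, ·), h⟫`) at the coefficients of `y`, and the matrix of the
theorem is its transpose.
-/

open scoped ComplexOrder InnerProductSpace ComplexConjugate
open Matrix RCLike

section

variable {𝕜 E ι : Type*} [RCLike 𝕜] [NormedAddCommGroup E] [InnerProductSpace 𝕜 E]

theorem forall_le_norm_smul_sub_sq_iff {α : ℝ} (hα : 0 < α) (y h : E) :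
    (∀ c : 𝕜, ‖h‖ ^ 2 - 1 / α ≤ ‖c • y - h‖ ^ 2) ↔ α * ‖⟪y, h⟫_𝕜‖ ^ 2 ≤ ‖y‖ ^ 2 := by
  have expand (c : 𝕜) : ‖c • y - h‖ ^ 2 = ‖c‖ ^ 2 * ‖y‖ ^ 2 - 2 * re ⟪c • y, h⟫_𝕜 + ‖h‖ ^ 2 := by
    rw [@norm_sub_sq 𝕜, norm_smul, mul_pow]
  simp only [expand]
  constructor
  · intro H
    rcases eq_or_ne y 0 with rfl | hy
    · simp
    have hy2 : 0 < ‖y‖ ^ 2 := by positivity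
    -- `c = ⟪y, h⟫ / ‖y‖²` minimises `‖c • y - h‖`
    have hmin := H (⟪y, h⟫_𝕜 / (‖y‖ ^ 2 : ℝ))
    rw [inner_smul_left, map_div₀, conj_ofReal, div_mul_eq_mul_div, RCLike.conj_mul, norm_div,
      norm_ofReal, abs_of_pos hy2] at hmin
    norm_cast at hmin
    have key : ‖⟪y, h⟫_𝕜‖ ^ 2 / ‖y‖ ^ 2 ≤ 1 / α := by
      rw [div_pow, div_mul_eq_mul_div, pow_two (‖y‖ ^ 2), mul_div_mul_right _ _ hy2.ne'] at hmin
      linarith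
    rw [div_le_div_iff₀ hy2 hα] at key
    linarith
  · intro H c
    have hre : re ⟪c • y, h⟫_𝕜 ≤ ‖c‖ * ‖⟪y, h⟫_𝕜‖ := by
      rw [inner_smul_left]
      exact (re_le_norm _).trans (by simp)
    have hsq : (α * ‖c‖ * ‖⟪y, h⟫_𝕜‖ - 1) ^ 2 / α
        = α * ‖c‖ ^ 2 * ‖⟪y, h⟫_𝕜‖ ^ 2 - 2 * (‖c‖ * ‖⟪y, h⟫_𝕜‖) + 1 / α := by
      field_simp; ring
    have hsq_nonneg : 0 ≤ (α * ‖c‖ * ‖⟪y, h⟫_𝕜‖ - 1) ^ 2 / α := by positivity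
    have hH : ‖c‖ ^ 2 * (α * ‖⟪y, h⟫_𝕜‖ ^ 2) ≤ ‖c‖ ^ 2 * ‖y‖ ^ 2 := by gcongr
    nlinarith

theorem Submodule.forall_le_norm_sub_sq_iff (V : Submodule 𝕜 E) {α : ℝ} (hα : 0 < α) (h : E) :
    (∀ y ∈ V, ‖h‖ ^ 2 - 1 / α ≤ ‖y - h‖ ^ 2) ↔ ∀ y ∈ V, α * ‖⟪y, h⟫_𝕜‖ ^ 2 ≤ ‖y‖ ^ 2 := by
  refine ⟨fun H y hy => ?_, fun H y hy => ?_⟩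
  · exact (forall_le_norm_smul_sub_sq_iff hα y h).1 fun c => H _ (V.smul_mem c hy)
  · simpa using (forall_le_norm_smul_sub_sq_iff hα y h).2 (H y hy) (1 : 𝕜)

theorem forall_sum_conj_smul_iff_forall_mem_span [Fintype ι] (u : ι → E) (P : E → Prop) :
    (∀ a : ι → 𝕜, P (∑ k, conj (a k) • u k)) ↔ ∀ y ∈ Submodule.span 𝕜 (Set.range u), P y := by
  refine ⟨fun H y hy => ?_, fun H a => H _ ?_⟩
  · obtain ⟨c, rfl⟩ := (Submodule.mem_span_range_iff_exists_fun 𝕜).mp hy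
    simpa using H (star c)
  · exact Submodule.sum_mem _ fun k _ => Submodule.smul_mem _ _ (Submodule.subset_span ⟨k, rfl⟩)

namespace Matrix

theorem star_dotProduct_gram_sub_vecMulVec_mulVec [Fintype ι] (u : ι → E) (h : E) (α : ℝ)
    (v : ι → 𝕜) :
    star v ⬝ᵥ ((gram 𝕜 u - (α : 𝕜) • vecMulVec (fun i => ⟪u i, h⟫_𝕜) (star fun i => ⟪u i, h⟫_𝕜))
      *ᵥ v) = ((‖∑ i, v i • u i‖ ^ 2 - α * ‖⟪∑ i, v i • u i, h⟫_𝕜‖ ^ 2 : ℝ) : 𝕜) := by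
  have hinner : star v ⬝ᵥ (fun i => ⟪u i, h⟫_𝕜) = ⟪∑ i, v i • u i, h⟫_𝕜 := by
    simp [dotProduct, sum_inner, inner_smul_left]
  have hinner_conj : (star fun i => ⟪u i, h⟫_𝕜) ⬝ᵥ v = conj ⟪∑ i, v i • u i, h⟫_𝕜 := by
    simp [← hinner, dotProduct, mul_comm]
  rw [sub_mulVec, dotProduct_sub, smul_mulVec, dotProduct_smul, star_dotProduct_gram_mulVec,
    vecMulVec_mulVec, dotProduct_smul, hinner, op_smul_eq_mul, hinner_conj]
  push_cast
  rw [inner_self_eq_norm_sq_to_K, ← RCLike.mul_conj, smul_eq_mul]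

theorem posSemidef_gram_sub_vecMulVec_iff [Fintype ι] (u : ι → E) (h : E) (α : ℝ) :
    (gram 𝕜 u - (α : 𝕜) • vecMulVec (fun i => ⟪u i, h⟫_𝕜) (star fun i => ⟪u i, h⟫_𝕜)).PosSemidef
      ↔ ∀ y ∈ Submodule.span 𝕜 (Set.range u), α * ‖⟪y, h⟫_𝕜‖ ^ 2 ≤ ‖y‖ ^ 2 := by
  have herm : (gram 𝕜 u - (α : 𝕜) •
      vecMulVec (fun i => ⟪u i, h⟫_𝕜) (star fun i => ⟪u i, h⟫_𝕜)).IsHermitian :=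
    (isHermitian_gram 𝕜 u).sub ((posSemidef_vecMulVec_self_star _).isHermitian.smul (conj_ofReal α))
  simp only [posSemidef_iff_dotProduct_mulVec, and_iff_right herm,
    star_dotProduct_gram_sub_vecMulVec_mulVec, ofReal_nonneg, sub_nonneg,
    Submodule.mem_span_range_iff_exists_fun, forall_exists_index, forall_apply_eq_imp_iff]

end Matrix

end

theorem Real.le_iInf_iff_of_nonneg {ι : Type*} [Nonempty ι] {f : ι → ℝ} (hf : ∀ i, 0 ≤ f i)
    {c : ℝ} : c ≤ ⨅ i, f i ↔ ∀ i, c ≤ f i :=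
  le_ciInf_iff ⟨0, Set.forall_mem_range.2 hf⟩

theorem quadrature_lower_bound_iff_posSemidef {D H : Type*} [Nonempty D]
    [NormedAddCommGroup H] [InnerProductSpace ℂ H]
    (K : D → D → ℂ) (rep : D → H)
    (hK : ∀ x y, K x y = (inner ℂ (rep y) (rep x) : ℂ))
    (h : H) (α : ℝ) (hα : 0 < α) (n : ℕ) :
    (‖h‖ ^ 2 - 1 / α ≤ ⨅ (x : Fin n → D) (a : Fin n → ℂ),
        ‖(∑ k, (starRingEnd ℂ) (a k) • rep (x k)) - h‖ ^ 2) ↔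
      ∀ x : Fin n → D, Matrix.PosSemidef (Matrix.of fun j k : Fin n =>
        K (x j) (x k) -
          (α : ℂ) * (starRingEnd ℂ) ((inner ℂ (rep (x j)) h : ℂ)) * (inner ℂ (rep (x k)) h : ℂ)) := by
  rw [Real.le_iInf_iff_of_nonneg fun x => Real.iInf_nonneg fun a => sq_nonneg _]
  refine forall_congr' fun x => ?_
  rw [Real.le_iInf_iff_of_nonneg fun a => sq_nonneg _,
    forall_sum_conj_smul_iff_forall_mem_span (fun k => rep (x k))
      (fun y => ‖h‖ ^ 2 - 1 / α ≤ ‖y - h‖ ^ 2),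
    Submodule.forall_le_norm_sub_sq_iff _ hα, ← posSemidef_gram_sub_vecMulVec_iff,
    ← posSemidef_transpose_iff]
  congr!
  ext j k
  simp only [transpose_apply, of_apply, Matrix.sub_apply, gram_apply, Matrix.smul_apply,
    vecMulVec_apply, Pi.star_apply, RCLike.star_def, smul_eq_mul, hK,
    RCLike.ofReal_eq_complex_ofReal]
  ring
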